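/- arXiv:1209.2692 — 8 statements merged into one kernel-verified Lean document; each statement's English description precedes it below -/
import Mathlib

section
/- If the trigonometric polynomial B(ξ) = ∑_{k=-p}^{p} b_k e^{-ikξ} is real-valued (equivalently b_{-k} = b_k, real) and B(ξ) ≥ 0 for all ξ ∈ [-π, π], then for every j ≥ 0 and every k, |b_{j,k}| ≤ b_{j,0}, where b_{j,k} are the coefficients of b_j(z) = b(z)b(z^2)⋯b(z^{2^{j-1}}). -/
/-!
The coefficients `b_{j,k}` are the cosine coefficients of `B_j(ξ) = ∏_{i<j} B(2^i ξ)`, because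
passing from `c(z)` to `b(z) c(z²)` multiplies the cosine polynomial by `B(ξ)` and dilates the old
one by `2` (the sine terms cancel by the symmetry of `b`). So `B_j ≥ 0`, and orthogonality gives
`2π b_{j,k} = ∫_{-π}^{π} B_j(ξ) cos(kξ) dξ`, whose absolute value is at most `∫ B_j = 2π b_{j,0}`.
-/

open Real Function intervalIntegral

noncomputable section

/-- For symmetric `c` this is `∑ c_m e^{-imξ}`; `cosPoly b` is the paper's `B`. -/
def cosPoly (c : ℤ → ℝ) (ξ : ℝ) : ℝ := ∑ᶠ m : ℤ, c m * cos (m * ξ)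

/-- The coefficients of the Laurent polynomial `a(z) c(z²)`. -/
def dilatedConv (a c : ℤ → ℝ) (k : ℤ) : ℝ := ∑ᶠ ℓ : ℤ, a (k - 2 * ℓ) * c ℓ

theorem integral_cos_int_mul (n : ℤ) :
    ∫ ξ in -π..π, cos (n * ξ) = if n = 0 then 2 * π else 0 := by
  split_ifs with hn
  · simp [hn, two_mul]
  · have hn' : (n : ℝ) ≠ 0 := Int.cast_ne_zero.mpr hn
    rw [integral_comp_mul_left (fun x => cos x) hn', integral_cos, mul_neg, ← neg_mul,
      ← Int.cast_neg, sin_int_mul_pi, sin_int_mul_pi, sub_zero, smul_zero]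

theorem integral_cos_int_mul_mul_cos_int_mul (m k : ℤ) :
    ∫ ξ in -π..π, cos (m * ξ) * cos (k * ξ) =
      (if m = -k then π else 0) + (if m = k then π else 0) := by
  have hprod : ∀ ξ : ℝ, cos (m * ξ) * cos (k * ξ) =
      cos (((m + k : ℤ) : ℝ) * ξ) / 2 + cos (((m - k : ℤ) : ℝ) * ξ) / 2 := by
    intro ξ
    push_cast
    rw [add_mul, sub_mul, cos_add, cos_sub]
    ring
  simp_rw [hprod]
  rw [integral_add (by apply Continuous.intervalIntegrable; fun_prop)
      (by apply Continuous.intervalIntegrable; fun_prop),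
    integral_div, integral_div, integral_cos_int_mul, integral_cos_int_mul]
  simp only [add_eq_zero_iff_eq_neg, sub_eq_zero]
  split_ifs <;> ring

theorem cosPoly_eq_sum {c : ℤ → ℝ} {s : Finset ℤ} (hs : support c ⊆ s) (ξ : ℝ) :
    cosPoly c ξ = ∑ m ∈ s, c m * cos (m * ξ) :=
  finsum_eq_sum_of_support_subset _ ((support_mul_subset_left _ _).trans hs)

theorem continuous_cosPoly {c : ℤ → ℝ} (hc : HasFiniteSupport c) : Continuous (cosPoly c) := by
  rw [funext (cosPoly_eq_sum hc.coe_toFinset.superset)]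
  fun_prop

theorem cosPoly_periodic (c : ℤ → ℝ) : Periodic (cosPoly c) (2 * π) := fun ξ =>
  finsum_congr fun m => by rw [mul_add, cos_add_int_mul_two_pi]

theorem finsum_mul_sin_eq_zero {c : ℤ → ℝ} (hsym : ∀ k, c (-k) = c k) (ξ : ℝ) :
    ∑ᶠ m : ℤ, c m * sin (m * ξ) = 0 := by
  have h : ∑ᶠ m : ℤ, c m * sin (m * ξ) = -∑ᶠ m : ℤ, c m * sin (m * ξ) :=
    calc ∑ᶠ m : ℤ, c m * sin (m * ξ) = ∑ᶠ m : ℤ, c (-m) * sin ((-m : ℤ) * ξ) :=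
          (finsum_comp_equiv (Equiv.neg ℤ)).symm
      _ = -∑ᶠ m : ℤ, c m * sin (m * ξ) := by
          rw [← finsum_neg_distrib]
          simp [hsym, neg_mul]
  linarith

theorem integral_cosPoly_mul_cos {c : ℤ → ℝ} (hc : HasFiniteSupport c)
    (hsym : ∀ k, c (-k) = c k) (k : ℤ) :
    ∫ ξ in -π..π, cosPoly c ξ * cos (k * ξ) = 2 * π * c k := by
  -- with `±k ∈ s` the two Kronecker sums below evaluate without a case split
  set s := hc.toFinset ∪ {k, -k}
  have hs : support c ⊆ s := fun m hm => Finset.mem_union_left _ (hc.mem_toFinset.mpr hm)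
  calc ∫ ξ in -π..π, cosPoly c ξ * cos (k * ξ)
      = ∑ m ∈ s, c m * ∫ ξ in -π..π, cos (m * ξ) * cos (k * ξ) := by
        simp_rw [cosPoly_eq_sum hs, Finset.sum_mul, mul_assoc]
        rw [integral_finsetSum fun m _ => by
          apply Continuous.intervalIntegrable; fun_prop]
        simp_rw [integral_const_mul]
    _ = c (-k) * π + c k * π := by
        simp_rw [integral_cos_int_mul_mul_cos_int_mul, mul_add, Finset.sum_add_distrib, mul_ite,
          mul_zero, Finset.sum_ite_eq']
        simp [s]
    _ = 2 * π * c k := by rw [hsym]; ring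

theorem abs_le_of_cosPoly_nonneg {c : ℤ → ℝ} (hc : HasFiniteSupport c)
    (hsym : ∀ k, c (-k) = c k) (hnn : ∀ ξ, 0 ≤ cosPoly c ξ) (k : ℤ) : |c k| ≤ c 0 := by
  have hF := continuous_cosPoly hc
  have hbound : |∫ ξ in -π..π, cosPoly c ξ * cos (k * ξ)| ≤ ∫ ξ in -π..π, cosPoly c ξ := by
    refine (abs_integral_le_integral_abs (by linarith [pi_pos])).trans
      (integral_mono_on (by linarith [pi_pos]) ?_ ?_ fun ξ _ => ?_)
    · apply Continuous.intervalIntegrable; fun_prop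
    · exact hF.intervalIntegrable _ _
    · rw [abs_mul, abs_of_nonneg (hnn ξ)]
      exact mul_le_of_le_one_right (hnn ξ) (abs_cos_le_one _)
  have h0 := integral_cosPoly_mul_cos hc hsym 0
  simp only [Int.cast_zero, zero_mul, cos_zero, mul_one] at h0
  rw [integral_cosPoly_mul_cos hc hsym, h0, abs_mul, abs_of_pos (by positivity)] at hbound
  exact le_of_mul_le_mul_left hbound (by positivity)

theorem support_dilatedConv_subset (a c : ℤ → ℝ) :
    support (dilatedConv a c) ⊆ Set.image2 (fun m ℓ => m + 2 * ℓ) (support a) (support c) := by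
  intro k hk
  obtain ⟨ℓ, hℓ⟩ : ∃ ℓ, a (k - 2 * ℓ) * c ℓ ≠ 0 := by
    by_contra! h
    exact hk (finsum_eq_zero_of_forall_eq_zero h)
  exact ⟨k - 2 * ℓ, left_ne_zero_of_mul hℓ, ℓ, right_ne_zero_of_mul hℓ, sub_add_cancel k _⟩

theorem hasFiniteSupport_dilatedConv {a c : ℤ → ℝ} (ha : HasFiniteSupport a)
    (hc : HasFiniteSupport c) : HasFiniteSupport (dilatedConv a c) :=
  (Set.Finite.image2 _ ha hc).subset (support_dilatedConv_subset a c)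

theorem dilatedConv_neg {a c : ℤ → ℝ} (hsa : ∀ k, a (-k) = a k) (hsc : ∀ k, c (-k) = c k)
    (k : ℤ) : dilatedConv a c (-k) = dilatedConv a c k := by
  rw [dilatedConv, ← finsum_comp_equiv (Equiv.neg ℤ)]
  refine finsum_congr fun ℓ => ?_
  rw [Equiv.neg_apply, hsc, ← hsa]
  ring_nf

theorem finsum_comp_sub_mul_cos {a : ℤ → ℝ} (ha : HasFiniteSupport a)
    (hsym : ∀ k, a (-k) = a k) (n : ℤ) (ξ : ℝ) :
    ∑ᶠ k : ℤ, a (k - n) * cos (k * ξ) = cosPoly a ξ * cos (n * ξ) := by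
  calc ∑ᶠ k : ℤ, a (k - n) * cos (k * ξ)
      = ∑ᶠ m : ℤ, a m * cos ((m + n : ℤ) * ξ) := by
        rw [← finsum_comp_equiv (Equiv.addRight n)]
        simp
    _ = ∑ᶠ m : ℤ, (a m * cos (m * ξ) * cos (n * ξ) - a m * sin (m * ξ) * sin (n * ξ)) := by
        refine finsum_congr fun m => ?_
        rw [Int.cast_add, add_mul, cos_add]
        ring
    _ = cosPoly a ξ * cos (n * ξ) - (∑ᶠ m : ℤ, a m * sin (m * ξ)) * sin (n * ξ) := by
        rw [finsum_sub_distrib (by fun_prop) (by fun_prop), cosPoly, finsum_mul, finsum_mul]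
    _ = cosPoly a ξ * cos (n * ξ) := by rw [finsum_mul_sin_eq_zero hsym, zero_mul, sub_zero]

theorem cosPoly_dilatedConv {a c : ℤ → ℝ} (ha : HasFiniteSupport a) (hc : HasFiniteSupport c)
    (hsym : ∀ k, a (-k) = a k) (ξ : ℝ) :
    cosPoly (dilatedConv a c) ξ = cosPoly a ξ * cosPoly c (2 * ξ) := by
  set t := hc.toFinset
  set u := Finset.image₂ (fun m ℓ => m + 2 * ℓ) ha.toFinset t
  have hu : support (dilatedConv a c) ⊆ u := by
    rw [Finset.coe_image₂, ha.coe_toFinset, hc.coe_toFinset]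
    exact support_dilatedConv_subset a c
  have hinner : ∀ ℓ ∈ t,
      ∑ k ∈ u, a (k - 2 * ℓ) * cos (k * ξ) = cosPoly a ξ * cos ((2 * ℓ : ℤ) * ξ) := by
    intro ℓ hℓ
    rw [← finsum_comp_sub_mul_cos ha hsym, finsum_eq_sum_of_support_subset]
    intro k hk
    rw [← sub_add_cancel k (2 * ℓ)]
    exact Finset.mem_image₂_of_mem (f := fun m ℓ => m + 2 * ℓ)
      (ha.mem_toFinset.mpr (left_ne_zero_of_mul hk)) hℓ
  calc cosPoly (dilatedConv a c) ξ
      = ∑ k ∈ u, (∑ ℓ ∈ t, a (k - 2 * ℓ) * c ℓ) * cos (k * ξ) := by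
        rw [cosPoly_eq_sum hu]
        refine Finset.sum_congr rfl fun k _ => ?_
        rw [dilatedConv, finsum_eq_sum_of_support_subset _
          ((support_mul_subset_right _ _).trans hc.coe_toFinset.superset)]
    _ = ∑ ℓ ∈ t, c ℓ * ∑ k ∈ u, a (k - 2 * ℓ) * cos (k * ξ) := by
        simp_rw [Finset.sum_mul, Finset.mul_sum]
        rw [Finset.sum_comm]
        refine Finset.sum_congr rfl fun ℓ _ => Finset.sum_congr rfl fun k _ => by ring
    _ = cosPoly a ξ * cosPoly c (2 * ξ) := by
        rw [Finset.sum_congr rfl fun ℓ hℓ => by rw [hinner ℓ hℓ],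
          cosPoly_eq_sum hc.coe_toFinset.superset, Finset.mul_sum]
        refine Finset.sum_congr rfl fun ℓ _ => ?_
        push_cast
        ring_nf

theorem cosPoly_nonneg_of_forall_mem_Icc {c : ℤ → ℝ}
    (h : ∀ ξ ∈ Set.Icc (-π) π, 0 ≤ cosPoly c ξ) (ξ : ℝ) : 0 ≤ cosPoly c ξ := by
  obtain ⟨η, hη, hξη⟩ := (cosPoly_periodic c).exists_mem_Ico (by positivity) ξ (-π)
  rw [hξη]
  exact h η ⟨hη.1, by linarith [hη.2]⟩

end

/-- Rioul's lemma: if the symmetric real trigonometric polynomial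
`B(ξ) = ∑_k b_k e^{-ikξ} = ∑_k b_k cos(kξ)` is nonnegative on `[-π, π]`, then the
central coefficient of each iterated mask `b_j(z) = b(z) b(z^2) ⋯ b(z^{2^{j-1}})`
dominates all others: `|b_{j,k}| ≤ b_{j,0}`. -/
theorem rioul_central_coefficient_dominates
    (p : ℕ) (b : ℤ → ℝ)
    (hb : ∀ k : ℤ, (p : ℤ) < |k| → b k = 0)
    (hsym : ∀ k : ℤ, b (-k) = b k)
    (hB : ∀ ξ ∈ Set.Icc (-Real.pi) Real.pi,
      0 ≤ ∑ᶠ k : ℤ, b k * Real.cos (k * ξ))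
    (bj : ℕ → ℤ → ℝ)
    (h0 : ∀ k : ℤ, bj 0 k = if k = 0 then 1 else 0)
    (hrec : ∀ (j : ℕ) (k : ℤ), bj (j + 1) k = ∑ᶠ ℓ : ℤ, b (k - 2 * ℓ) * bj j ℓ) :
    ∀ (j : ℕ) (k : ℤ), |bj j k| ≤ bj j 0 := by
  have hbfin : HasFiniteSupport b := (Set.finite_Icc (-(p : ℤ)) p).subset fun k hk =>
    abs_le.mp (not_lt.mp (mt (hb k) hk))
  have hBnn : ∀ ξ, 0 ≤ cosPoly b ξ := cosPoly_nonneg_of_forall_mem_Icc hB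
  have hbj : ∀ j, HasFiniteSupport (bj j) ∧ (∀ k, bj j (-k) = bj j k) ∧
      ∀ ξ, 0 ≤ cosPoly (bj j) ξ := by
    intro j
    induction j with
    | zero =>
      refine ⟨(Set.finite_singleton 0).subset fun k hk => ?_, fun k => by simp [h0], fun ξ => ?_⟩
      · by_contra h
        exact hk (by simpa [h0] using h)
      · rw [cosPoly, finsum_eq_single _ 0 fun k hk => by simp [h0, hk]]
        simp [h0]
    | succ j ih =>
      obtain ⟨hfin, hsymj, hnn⟩ := ih
      have hconv : bj (j + 1) = dilatedConv b (bj j) := funext (hrec j)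
      rw [hconv]
      exact ⟨hasFiniteSupport_dilatedConv hbfin hfin, dilatedConv_neg hsym hsymj,
        fun ξ => cosPoly_dilatedConv hbfin hfin hsym ξ ▸ mul_nonneg (hBnn ξ) (hnn (2 * ξ))⟩
  intro j k
  obtain ⟨hfin, hsymj, hnn⟩ := hbj j
  exact abs_le_of_cosPoly_nonneg hfin hsymj hnn k
end

section
/- The j-th power of the matrix M = (b_{k-2ℓ})_{k,ℓ=-p+1,…,p-1} is given by M^j = (b_{j, k - 2^j ℓ})_{k,ℓ=-p+1,…,p-1}, where b_{j,m} are the coefficients of b_j(z) = b(z)b(z^2)⋯b(z^{2^{j-1}}). -/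
/-!
Index `Fin (2p-1)` by the centred integers `-(p-1), …, p-1`. Since `b` vanishes outside
`[-p, p]`, for a centred `k` the coefficient `b (k - 2m)` can only be nonzero when `m` is again
centred, so the bi-infinite convolution `∑ᶠ m, b (k - 2m) c m` is a finite sum over `Fin (2p-1)`.
Writing `M^(j+1) = M * M^j` and substituting `m ↦ m - 2^j ℓ` in the recursion for `b_{j+1}`
then gives the induction step.
-/

open Finset

def centeredIndex (p : ℕ) (i : Fin (2 * p - 1)) : ℤ := (i : ℤ) - ((p : ℤ) - 1)

lemma centeredIndex_injective (p : ℕ) : Function.Injective (centeredIndex p) := by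
  intro i i' h
  unfold centeredIndex at h
  omega

lemma abs_centeredIndex_le {p : ℕ} (i : Fin (2 * p - 1)) : |centeredIndex p i| ≤ (p : ℤ) - 1 := by
  unfold centeredIndex
  rw [abs_le]
  omega

lemma exists_centeredIndex_eq {p : ℕ} {m : ℤ} (hm : |m| ≤ (p : ℤ) - 1) :
    ∃ i, centeredIndex p i = m := by
  rw [abs_le] at hm
  exact ⟨⟨(m + ((p : ℤ) - 1)).toNat, by omega⟩, by simp only [centeredIndex]; omega⟩

section Mask

variable {R : Type*} [NonUnitalNonAssocSemiring R] {p : ℕ} {b : ℤ → R}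

lemma abs_le_of_mask_ne_zero (hb : ∀ k : ℤ, (p : ℤ) < |k| → b k = 0) {k m : ℤ}
    (hk : |k| ≤ (p : ℤ) - 1) (hkm : b (k - 2 * m) ≠ 0) : |m| ≤ (p : ℤ) - 1 := by
  have hkm : |k - 2 * m| ≤ p := not_lt.mp (mt (hb _) hkm)
  rw [abs_le] at hk hkm ⊢
  omega

lemma finsum_mask_mul_eq_sum_centeredIndex (hb : ∀ k : ℤ, (p : ℤ) < |k| → b k = 0) {k : ℤ}
    (hk : |k| ≤ (p : ℤ) - 1) (c : ℤ → R) :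
    ∑ᶠ m : ℤ, b (k - 2 * m) * c m =
      ∑ i, b (k - 2 * centeredIndex p i) * c (centeredIndex p i) := by
  let e : Fin (2 * p - 1) ↪ ℤ := ⟨centeredIndex p, centeredIndex_injective p⟩
  have hsupp : (Function.support fun m => b (k - 2 * m) * c m) ⊆ (univ.map e : Finset ℤ) := by
    intro m hm
    have hbm : b (k - 2 * m) ≠ 0 := fun h => hm (by simp [h])
    simpa [e] using exists_centeredIndex_eq (abs_le_of_mask_ne_zero hb hk hbm)
  rw [finsum_eq_sum_of_support_subset _ hsupp, sum_map]
  rfl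

lemma finsum_mask_mul_shift (c : ℤ → R) (k a : ℤ) :
    ∑ᶠ m : ℤ, b (k - 2 * a - 2 * m) * c m = ∑ᶠ m : ℤ, b (k - 2 * m) * c (m - a) := by
  rw [← finsum_comp_equiv (Equiv.subRight a)]
  exact finsum_congr fun m => by simp only [Equiv.subRight_apply]; ring_nf

end Mask

theorem matrix_power_eq_iterated_mask_coefficients_general
    (p : ℕ) (b : ℤ → ℝ)
    (hb : ∀ k : ℤ, (p : ℤ) < |k| → b k = 0)
    (bj : ℕ → ℤ → ℝ)
    (h0 : ∀ k : ℤ, bj 0 k = if k = 0 then 1 else 0)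
    (hrec : ∀ (j : ℕ) (k : ℤ), bj (j + 1) k = ∑ᶠ ℓ : ℤ, b (k - 2 * ℓ) * bj j ℓ)
    (M : Matrix (Fin (2 * p - 1)) (Fin (2 * p - 1)) ℝ)
    (hM : ∀ k ℓ : Fin (2 * p - 1),
      M k ℓ = b (((k : ℤ) - ((p : ℤ) - 1)) - 2 * ((ℓ : ℤ) - ((p : ℤ) - 1)))) :
    ∀ (j : ℕ) (k ℓ : Fin (2 * p - 1)),
      (M ^ j) k ℓ = bj j (((k : ℤ) - ((p : ℤ) - 1)) - 2 ^ j * ((ℓ : ℤ) - ((p : ℤ) - 1))) := by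
  intro j
  change ∀ k ℓ, (M ^ j) k ℓ = bj j (centeredIndex p k - 2 ^ j * centeredIndex p ℓ)
  induction j with
  | zero =>
    intro k ℓ
    simp only [pow_zero, Matrix.one_apply, h0, one_mul, sub_eq_zero,
      (centeredIndex_injective p).eq_iff]
  | succ j ih =>
    intro k ℓ
    rw [pow_succ', Matrix.mul_apply, hrec, pow_succ', mul_assoc, finsum_mask_mul_shift,
      finsum_mask_mul_eq_sum_centeredIndex hb (abs_centeredIndex_le k)]
    exact sum_congr rfl fun m _ => by rw [hM, ih]; rfl

/-- The `j`-th power of the matrix `M = (b_{k-2ℓ})_{k,ℓ = -p+1,…,p-1}` is given by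
`M^j = (b_{j, k - 2^j ℓ})_{k,ℓ = -p+1,…,p-1}`, where `b_{j,m}` are the coefficients of
`b_j(z) = b(z) b(z^2) ⋯ b(z^{2^{j-1}})` (index `i : Fin (2p-1)` corresponds to the
integer `i - (p-1)`). -/
theorem matrix_power_eq_iterated_mask_coefficients
    (p : ℕ) (hp : 1 ≤ p) (b : ℤ → ℝ)
    (hb : ∀ k : ℤ, (p : ℤ) < |k| → b k = 0)
    (bj : ℕ → ℤ → ℝ)
    (h0 : ∀ k : ℤ, bj 0 k = if k = 0 then 1 else 0)
    (hrec : ∀ (j : ℕ) (k : ℤ), bj (j + 1) k = ∑ᶠ ℓ : ℤ, b (k - 2 * ℓ) * bj j ℓ)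
    (M : Matrix (Fin (2 * p - 1)) (Fin (2 * p - 1)) ℝ)
    (hM : ∀ k ℓ : Fin (2 * p - 1),
      M k ℓ = b (((k : ℤ) - ((p : ℤ) - 1)) - 2 * ((ℓ : ℤ) - ((p : ℤ) - 1)))) :
    ∀ (j : ℕ) (k ℓ : Fin (2 * p - 1)),
      (M ^ j) k ℓ = bj j (((k : ℤ) - ((p : ℤ) - 1)) - 2 ^ j * ((ℓ : ℤ) - ((p : ℤ) - 1))) :=
  matrix_power_eq_iterated_mask_coefficients_general p b hb bj h0 hrec M hM
end

section
/- If B(ξ) ≥ 0 for all ξ, then lim_{j→∞} b_{j,0}^{1/j} = ρ, where ρ is the spectral radius of the matrix M = (b_{k-2ℓ})_{k,ℓ=-p+1,…,p-1}. -/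
/-!
Put `T_j(ξ) = ∑_k b_{j,k} e^{ikξ}`. The recursion for `b_j` reads `T_{j+1}(ξ) = B(ξ) T_j(2ξ)`, so
every `T_j` is real and nonnegative, whence
`2π |b_{j,k}| = |∫ T_j(ξ) e^{-ikξ} dξ| ≤ ∫ T_j = 2π b_{j,0}` (Rioul's lemma).
In centred indices `(M^j)_{k,ℓ} = b_{j, k - 2^j ℓ}`, so the row-sum norm satisfies
`b_{j,0} ≤ ‖M^j‖ ≤ (2p - 1) b_{j,0}`; taking `j`-th roots, Gelfand's formula gives the limit.
-/

open Complex Filter Topology intervalIntegral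
open scoped ComplexOrder

-- With `ComplexOrder`, `0 ≤ trigPoly s c ξ` says that the value is real and nonnegative.
noncomputable def trigPoly (s : Finset ℤ) (c : ℤ → ℝ) (ξ : ℝ) : ℂ :=
  ∑ k ∈ s, (c k : ℂ) * exp (k * ξ * I)

theorem integral_exp_int_mul_I (n : ℤ) :
    ∫ ξ in (0 : ℝ)..2 * Real.pi, exp (n * ξ * I) =
      if n = 0 then ((2 * Real.pi : ℝ) : ℂ) else 0 := by
  split_ifs with hn
  · simp [hn]
  have hc : (n : ℂ) * I ≠ 0 := by simp [hn]
  simp_rw [mul_right_comm _ _ I]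
  rw [integral_exp_mul_complex hc]
  have : (n : ℂ) * I * ((2 * Real.pi : ℝ) : ℂ) = n * (2 * Real.pi * I) := by push_cast; ring
  rw [ofReal_zero, mul_zero, exp_zero, this, exp_int_mul_two_pi_mul_I, sub_self, zero_div]

theorem integral_trigPoly_mul_exp {s : Finset ℤ} {c : ℤ → ℝ} (hc : ∀ k ∉ s, c k = 0) (k : ℤ) :
    ∫ ξ in (0 : ℝ)..2 * Real.pi, trigPoly s c ξ * exp (-(k * ξ * I)) =
      ((2 * Real.pi * c k : ℝ) : ℂ) := by
  have hterm : ∀ ξ : ℝ, trigPoly s c ξ * exp (-(k * ξ * I)) =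
      ∑ m ∈ s, (c m : ℂ) * exp (((m - k : ℤ) : ℂ) * ξ * I) := fun ξ => by
    rw [trigPoly, Finset.sum_mul]
    refine Finset.sum_congr rfl fun m _ => ?_
    rw [mul_assoc, ← exp_add]
    push_cast
    ring_nf
  simp_rw [hterm]
  rw [integral_finsetSum fun m _ => (by fun_prop : Continuous _).intervalIntegrable _ _]
  simp_rw [integral_const_mul, integral_exp_int_mul_I, sub_eq_zero, mul_ite, mul_zero,
    Finset.sum_ite_eq']
  split_ifs with hk
  · push_cast; ring
  · simp [hc k hk]

theorem abs_le_of_trigPoly_nonneg {s : Finset ℤ} {c : ℤ → ℝ} (hc : ∀ k ∉ s, c k = 0)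
    (hT : ∀ ξ, 0 ≤ trigPoly s c ξ) (k : ℤ) : |c k| ≤ c 0 := by
  have hnorm : ∀ ξ, ((‖trigPoly s c ξ‖ : ℝ) : ℂ) = trigPoly s c ξ := fun ξ => by
    rw [← re_eq_norm.mpr (hT ξ)]
    exact (eq_re_of_ofReal_le (r := 0) (by simpa using hT ξ)).symm
  have hmass : ∫ ξ in (0 : ℝ)..2 * Real.pi, ‖trigPoly s c ξ‖ = 2 * Real.pi * c 0 := by
    apply ofReal_injective
    rw [← intervalIntegral.integral_ofReal]
    simp_rw [hnorm]
    simpa using integral_trigPoly_mul_exp hc 0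
  have hk : 2 * Real.pi * |c k| ≤ 2 * Real.pi * c 0 := by
    calc 2 * Real.pi * |c k|
        = ‖∫ ξ in (0 : ℝ)..2 * Real.pi, trigPoly s c ξ * exp (-(k * ξ * I))‖ := by
          rw [integral_trigPoly_mul_exp hc, norm_real, Real.norm_eq_abs, abs_mul,
            abs_of_pos Real.two_pi_pos]
      _ ≤ ∫ ξ in (0 : ℝ)..2 * Real.pi, ‖trigPoly s c ξ * exp (-(k * ξ * I))‖ :=
          norm_integral_le_integral_norm Real.two_pi_pos.le
      _ = _ := by
          simp [norm_exp, hmass]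
  exact le_of_mul_le_mul_left hk Real.two_pi_pos

theorem trigPoly_eq_sum_cos {s : Finset ℤ} {c : ℤ → ℝ} (hs : ∀ k ∈ s, -k ∈ s)
    (hsymm : ∀ k, c (-k) = c k) (ξ : ℝ) :
    trigPoly s c ξ = ((∑ k ∈ s, c k * Real.cos (k * ξ) : ℝ) : ℂ) := by
  have hneg : trigPoly s c ξ = ∑ k ∈ s, (c k : ℂ) * exp (-(k * ξ) * I) :=
    Finset.sum_nbij' Neg.neg Neg.neg hs hs (fun k _ => neg_neg k) (fun k _ => neg_neg k)
      fun k _ => by push_cast [hsymm]; ring_nf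
  have htwice : 2 * trigPoly s c ξ = 2 * ∑ k ∈ s, (c k : ℂ) * cos (k * ξ) := by
    rw [two_mul]
    nth_rewrite 2 [hneg]
    rw [trigPoly, ← Finset.sum_add_distrib, Finset.mul_sum]
    refine Finset.sum_congr rfl fun k _ => ?_
    rw [mul_left_comm, two_cos]
    ring
  push_cast
  exact mul_left_cancel₀ two_ne_zero htwice

theorem trigPoly_nonneg_of_sum_cos_nonneg {s : Finset ℤ} {c : ℤ → ℝ} (hs : ∀ k ∈ s, -k ∈ s)
    (hsymm : ∀ k, c (-k) = c k) (hc : ∀ k ∉ s, c k = 0)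
    (hcos : ∀ ξ : ℝ, 0 ≤ ∑ᶠ k : ℤ, c k * Real.cos (k * ξ)) (ξ : ℝ) : 0 ≤ trigPoly s c ξ := by
  rw [trigPoly_eq_sum_cos hs hsymm, zero_le_real, ← finsum_eq_sum_of_support_subset _ fun k hk =>
    by_contra fun h => hk (by simp [hc k h])]
  exact hcos ξ

theorem Finset.sum_comp_sub_eq_sum {M : Type*} [AddCommMonoid M] {f : ℤ → M} {t u : Finset ℤ}
    (d : ℤ)     (hf : ∀ a ∉ t, f a = 0) (htu : ∀ a ∈ t, a + d ∈ u) :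
    ∑ k ∈ u, f (k - d) = ∑ a ∈ t, f a := by
  have hsupp : ∀ a, f a ≠ 0 → a ∈ t := fun a ha => by_contra fun h => ha (hf a h)
  rw [← finsum_eq_sum_of_support_subset f (s := t) fun a ha => hsupp a ha,
    ← finsum_eq_sum_of_support_subset (fun k => f (k - d)) (s := u) fun k hk => by
      simpa using htu _ (hsupp _ hk)]
  exact finsum_comp_equiv (Equiv.subRight d)

theorem finsum_eq_sum_fin_sub {M : Type*} [AddCommMonoid M] {f : ℤ → M} {a : ℤ} {n : ℕ}
    (h : ∀ k, f k ≠ 0 → -a ≤ k ∧ k < n - a) : ∑ᶠ k, f k = ∑ m : Fin n, f (m - a) := by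
  rw [Fin.sum_univ_eq_sum_range (fun m => f (m - a)), ← Finset.sum_image fun _ _ _ _ h => by
    simpa using h]
  refine finsum_eq_sum_of_support_subset f fun k hk => ?_
  obtain ⟨h1, h2⟩ := h k hk
  simp only [Finset.coe_image, Finset.coe_range, Set.mem_image, Set.mem_Iio]
  exact ⟨(k + a).toNat, by omega, by omega⟩

-- `cascadeCoeff b j k` is the coefficient of `z^k` in `b(z) b(z²) ⋯ b(z^{2^{j-1}})`.
noncomputable def cascadeCoeff (b : ℤ → ℝ) : ℕ → ℤ → ℝ
  | 0 => fun k => if k = 0 then 1 else 0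
  | j + 1 => fun k => ∑ᶠ ℓ : ℤ, b (k - 2 * ℓ) * cascadeCoeff b j ℓ

theorem eq_cascadeCoeff {b : ℤ → ℝ} {bj : ℕ → ℤ → ℝ} (h0 : ∀ k : ℤ, bj 0 k = if k = 0 then 1 else 0)
    (hrec : ∀ (j : ℕ) (k : ℤ), bj (j + 1) k = ∑ᶠ ℓ : ℤ, b (k - 2 * ℓ) * bj j ℓ) :
    bj = cascadeCoeff b := by
  funext j
  induction j with
  | zero => exact funext h0
  | succ j ih => exact funext fun k => by rw [hrec, ih, cascadeCoeff]

def cascadeRadius (p j : ℕ) : ℤ := ((2 : ℤ) ^ j - 1) * p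

theorem cascadeRadius_succ (p j : ℕ) : cascadeRadius p (j + 1) = 2 * cascadeRadius p j + p := by
  rw [cascadeRadius, cascadeRadius, pow_succ]
  ring

noncomputable def cascadeSupport (p j : ℕ) : Finset ℤ :=
  Finset.Icc (-cascadeRadius p j) (cascadeRadius p j)

section Cascade

variable {p : ℕ} {b : ℤ → ℝ}

theorem cascadeCoeff_eq_zero (hb : ∀ k ∉ Finset.Icc (-(p : ℤ)) p, b k = 0) {j : ℕ} {k : ℤ}
    (hk : k ∉ cascadeSupport p j) : cascadeCoeff b j k = 0 := by
  induction j generalizing k with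
  | zero =>
    have : k ≠ 0 := by rintro rfl; simp [cascadeSupport, cascadeRadius] at hk
    simp [cascadeCoeff, this]
  | succ j ih =>
    refine finsum_eq_zero_of_forall_eq_zero fun ℓ => ?_
    by_cases hℓ : ℓ ∈ cascadeSupport p j
    · rw [hb, zero_mul]
      simp only [cascadeSupport, Finset.mem_Icc, not_and_or, not_le] at hk hℓ ⊢
      rw [cascadeRadius_succ] at hk
      omega
    · rw [ih hℓ, mul_zero]

theorem cascadeCoeff_succ (hb : ∀ k ∉ Finset.Icc (-(p : ℤ)) p, b k = 0) (j : ℕ) (k : ℤ) :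
    cascadeCoeff b (j + 1) k = ∑ ℓ ∈ cascadeSupport p j, b (k - 2 * ℓ) * cascadeCoeff b j ℓ :=
  finsum_eq_sum_of_support_subset _ fun ℓ hℓ => by_contra fun h =>
    hℓ (by simp [cascadeCoeff_eq_zero hb h])

theorem trigPoly_cascadeCoeff_succ (hb : ∀ k ∉ Finset.Icc (-(p : ℤ)) p, b k = 0) (j : ℕ) (ξ : ℝ) :
    trigPoly (cascadeSupport p (j + 1)) (cascadeCoeff b (j + 1)) ξ =
      trigPoly (Finset.Icc (-(p : ℤ)) p) b ξ *
        trigPoly (cascadeSupport p j) (cascadeCoeff b j) (2 * ξ) := by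
  set F : ℤ → ℤ → ℂ := fun ℓ a => b a * cascadeCoeff b j ℓ * exp ((a + 2 * ℓ : ℤ) * ξ * I)
  calc trigPoly (cascadeSupport p (j + 1)) (cascadeCoeff b (j + 1)) ξ
      = ∑ k ∈ cascadeSupport p (j + 1), ∑ ℓ ∈ cascadeSupport p j, F ℓ (k - 2 * ℓ) := by
        refine Finset.sum_congr rfl fun k _ => ?_
        rw [cascadeCoeff_succ hb, Complex.ofReal_sum, Finset.sum_mul]
        refine Finset.sum_congr rfl fun ℓ _ => ?_
        simp only [F, sub_add_cancel]
        push_cast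
        ring
    _ = ∑ ℓ ∈ cascadeSupport p j, ∑ a ∈ Finset.Icc (-(p : ℤ)) p, F ℓ a := by
        rw [Finset.sum_comm]
        refine Finset.sum_congr rfl fun ℓ hℓ =>
          Finset.sum_comp_sub_eq_sum _ (fun a ha => ?_) fun a ha => ?_
        · simp [F, hb a ha]
        · simp only [cascadeSupport, Finset.mem_Icc] at ha hℓ ⊢
          rw [cascadeRadius_succ]
          omega
    _ = _ := by
        rw [trigPoly, trigPoly, Finset.sum_mul_sum, Finset.sum_comm]
        refine Finset.sum_congr rfl fun ℓ _ => Finset.sum_congr rfl fun a _ => ?_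
        simp only [F]
        push_cast
        rw [add_mul, add_mul, exp_add]
        ring_nf

theorem trigPoly_cascadeCoeff_nonneg (hb : ∀ k ∉ Finset.Icc (-(p : ℤ)) p, b k = 0)
    (hB : ∀ ξ, 0 ≤ trigPoly (Finset.Icc (-(p : ℤ)) p) b ξ) (j : ℕ) (ξ : ℝ) :
    0 ≤ trigPoly (cascadeSupport p j) (cascadeCoeff b j) ξ := by
  induction j generalizing ξ with
  | zero => simp [trigPoly, cascadeSupport, cascadeRadius, cascadeCoeff]
  | succ j ih => exact trigPoly_cascadeCoeff_succ hb j ξ ▸ mul_nonneg (hB ξ) (ih (2 * ξ))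

theorem abs_cascadeCoeff_le (hb : ∀ k ∉ Finset.Icc (-(p : ℤ)) p, b k = 0)
    (hB : ∀ ξ, 0 ≤ trigPoly (Finset.Icc (-(p : ℤ)) p) b ξ) (j : ℕ) (k : ℤ) :
    |cascadeCoeff b j k| ≤ cascadeCoeff b j 0 :=
  abs_le_of_trigPoly_nonneg (fun _ hk => cascadeCoeff_eq_zero hb hk)
    (trigPoly_cascadeCoeff_nonneg hb hB j) k

end Cascade

theorem Matrix.pow_apply_eq_cascadeCoeff {p : ℕ} {b : ℤ → ℝ} (hp : 1 ≤ p)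
    (hb : ∀ k ∉ Finset.Icc (-(p : ℤ)) p, b k = 0)
    {M : Matrix (Fin (2 * p - 1)) (Fin (2 * p - 1)) ℝ}
    (hM : ∀ k ℓ : Fin (2 * p - 1),
      M k ℓ = b (((k : ℤ) - ((p : ℤ) - 1)) - 2 * ((ℓ : ℤ) - ((p : ℤ) - 1))))
    (j : ℕ) (k ℓ : Fin (2 * p - 1)) :
    (M ^ j) k ℓ =
      cascadeCoeff b j (((k : ℤ) - ((p : ℤ) - 1)) - 2 ^ j * ((ℓ : ℤ) - ((p : ℤ) - 1))) := by
  induction j generalizing k with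
  | zero => simp [Matrix.one_apply, cascadeCoeff, sub_eq_zero, Fin.val_inj]
  | succ j ih =>
    set r : ℤ := (k : ℤ) - ((p : ℤ) - 1)
    set c : ℤ := (ℓ : ℤ) - ((p : ℤ) - 1)
    set g : ℤ → ℝ := fun μ => b (r - 2 * μ) * cascadeCoeff b j (μ - 2 ^ j * c)
    have hg : ∀ μ, g μ ≠ 0 → -((p : ℤ) - 1) ≤ μ ∧ μ < ((2 * p - 1 : ℕ) : ℤ) - ((p : ℤ) - 1) := by
      intro μ hμ
      have hbμ : r - 2 * μ ∈ Finset.Icc (-(p : ℤ)) p := by_contra fun h => hμ (by simp [g, hb _ h])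
      have := k.isLt
      simp only [r, Finset.mem_Icc] at hbμ
      omega
    calc (M ^ (j + 1)) k ℓ = ∑ m : Fin (2 * p - 1), g (m - ((p : ℤ) - 1)) := by
          simp only [pow_succ', Matrix.mul_apply, hM, ih, g, r, c]
      _ = ∑ᶠ μ, g μ := (finsum_eq_sum_fin_sub hg).symm
      _ = ∑ᶠ ν, g (ν + 2 ^ j * c) := (finsum_comp_equiv (Equiv.addRight _)).symm
      _ = _ := by
          simp only [g, cascadeCoeff, add_sub_cancel_right]
          refine finsum_congr fun ν => ?_
          congr 2
          ring

section LinftyOpNorm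

attribute [local instance] Matrix.linftyOpSeminormedAddCommGroup

theorem Matrix.norm_apply_le_linfty_opNorm {m n α : Type*} [Fintype m] [Fintype n]
    [SeminormedAddCommGroup α] (A : Matrix m n α) (i : m) (j : n) : ‖A i j‖ ≤ ‖A‖ := by
  rw [linfty_opNorm_def]
  calc ‖A i j‖ ≤ ∑ j', ‖A i j'‖ :=
        Finset.single_le_sum (fun j' _ => norm_nonneg (A i j')) (Finset.mem_univ j)
    _ ≤ _ := by
      simpa using NNReal.coe_le_coe.mpr
        (Finset.le_sup (f := fun i => ∑ j : n, ‖A i j‖₊) (Finset.mem_univ i))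

theorem Matrix.linfty_opNorm_le_card_mul {m n α : Type*} [Fintype m] [Fintype n]
    [SeminormedAddCommGroup α] (A : Matrix m n α) {C : ℝ} (hC : 0 ≤ C) (h : ∀ i j, ‖A i j‖ ≤ C) :
    ‖A‖ ≤ Fintype.card n * C := by
  lift C to NNReal using hC
  rw [linfty_opNorm_def]
  have : (Finset.univ.sup fun i => ∑ j : n, ‖A i j‖₊) ≤ Fintype.card n * C :=
    Finset.sup_le fun i _ => by
      simpa using Finset.sum_le_card_nsmul Finset.univ _ C fun j _ => (h i j : _)
  exact_mod_cast this

end LinftyOpNorm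

theorem tendsto_norm_pow_rpow_inv_spectralRadius {A : Type*} [NormedRing A] [NormedAlgebra ℂ A]
    [CompleteSpace A] (a : A) :
    Tendsto (fun j : ℕ => ‖a ^ j‖ ^ (j : ℝ)⁻¹) atTop (𝓝 (spectralRadius ℂ a).toReal) := by
  have hfin : spectralRadius ℂ a ≠ ⊤ := by
    refine ne_top_of_le_ne_top ?_ (spectrum.spectralRadius_le_pow_nnnorm_pow_one_div ℂ a 0)
    simp [ENNReal.mul_eq_top]
  refine ((ENNReal.tendsto_toReal hfin).comp
    (spectrum.pow_nnnorm_pow_one_div_tendsto_nhds_spectralRadius a)).congr fun j => ?_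
  simp [← ENNReal.toReal_rpow]

theorem tendsto_rpow_inv_of_le_of_le {a x : ℕ → ℝ} {C L : ℝ} (hC : 0 < C) (ha : ∀ j, 0 ≤ a j)
    (hlow : ∀ j, a j ≤ x j) (hup : ∀ j, x j ≤ C * a j)
    (hx : Tendsto (fun j : ℕ => x j ^ (j : ℝ)⁻¹) atTop (𝓝 L)) :
    Tendsto (fun j : ℕ => a j ^ (j : ℝ)⁻¹) atTop (𝓝 L) := by
  have hCroot : Tendsto (fun j : ℕ => C ^ (j : ℝ)⁻¹) atTop (𝓝 1) := by
    simpa [Function.comp_def] using ((Real.continuousAt_const_rpow hC.ne').tendsto.comp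
      tendsto_inv_atTop_nhds_zero_nat)
  have hdiv : Tendsto (fun j : ℕ => (x j / C) ^ (j : ℝ)⁻¹) atTop (𝓝 L) := by
    have hx0 : ∀ j, 0 ≤ x j := fun j => (ha j).trans (hlow j)
    simpa [Real.div_rpow (hx0 _) hC.le, Pi.div_def] using hx.div hCroot one_ne_zero
  refine tendsto_of_tendsto_of_tendsto_of_le_of_le hdiv hx (fun j => ?_) (fun j => ?_)
  · exact Real.rpow_le_rpow (div_nonneg ((ha j).trans (hlow j)) hC.le)
      ((div_le_iff₀' hC).mpr (hup j)) (by positivity)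
  · exact Real.rpow_le_rpow (ha j) (hlow j) (by positivity)

open Filter in
/-- If `B(ξ) = ∑_k b_k e^{-ikξ} = ∑_k b_k cos(kξ) ≥ 0` for all `ξ`, then
`b_{j,0}^{1/j} → ρ` as `j → ∞`, where `ρ` is the spectral radius of the matrix
`M = (b_{k-2ℓ})_{k,ℓ = -p+1,…,p-1}`. -/
theorem central_coefficient_growth_eq_spectral_radius
    (p : ℕ) (hp : 1 ≤ p) (b : ℤ → ℝ)
    (hb : ∀ k : ℤ, (p : ℤ) < |k| → b k = 0)
    (hsym : ∀ k : ℤ, b (-k) = b k)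
    (hB : ∀ ξ : ℝ, 0 ≤ ∑ᶠ k : ℤ, b k * Real.cos (k * ξ))
    (bj : ℕ → ℤ → ℝ)
    (h0 : ∀ k : ℤ, bj 0 k = if k = 0 then 1 else 0)
    (hrec : ∀ (j : ℕ) (k : ℤ), bj (j + 1) k = ∑ᶠ ℓ : ℤ, b (k - 2 * ℓ) * bj j ℓ)
    (M : Matrix (Fin (2 * p - 1)) (Fin (2 * p - 1)) ℝ)
    (hM : ∀ k ℓ : Fin (2 * p - 1),
      M k ℓ = b (((k : ℤ) - ((p : ℤ) - 1)) - 2 * ((ℓ : ℤ) - ((p : ℤ) - 1)))) :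
    Tendsto (fun j : ℕ => (bj j 0) ^ ((j : ℝ)⁻¹)) atTop
      (nhds ((spectralRadius ℂ (M.map (fun x : ℝ => (x : ℂ)))).toReal)) := by
  obtain rfl := eq_cascadeCoeff h0 hrec
  have hb' : ∀ k ∉ Finset.Icc (-(p : ℤ)) p, b k = 0 := fun k hk =>
    hb k (by rwa [Finset.mem_Icc, ← abs_le, not_le] at hk)
  have hsymb : ∀ k ∈ Finset.Icc (-(p : ℤ)) p, -k ∈ Finset.Icc (-(p : ℤ)) p := fun k hk => by
    simp only [Finset.mem_Icc] at hk ⊢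
    omega
  have hrioul := abs_cascadeCoeff_le hb' (trigPoly_nonneg_of_sum_cos_nonneg hsymb hsym hb' hB)
  let : NormedRing (Matrix (Fin (2 * p - 1)) (Fin (2 * p - 1)) ℂ) := Matrix.linftyOpNormedRing
  let : NormedAlgebra ℂ (Matrix (Fin (2 * p - 1)) (Fin (2 * p - 1)) ℂ) :=
    Matrix.linftyOpNormedAlgebra
  set A := M.map (fun x : ℝ => (x : ℂ)) with hA
  have hApow : ∀ j k ℓ, (A ^ j) k ℓ =
      cascadeCoeff b j (((k : ℤ) - ((p : ℤ) - 1)) - 2 ^ j * ((ℓ : ℤ) - ((p : ℤ) - 1))) := by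
    intro j k ℓ
    rw [hA, show (fun x : ℝ => (x : ℂ)) = ofRealHom from rfl, ← Matrix.map_pow, Matrix.map_apply,
      Matrix.pow_apply_eq_cascadeCoeff hp hb' hM]
    rfl
  let center : Fin (2 * p - 1) := ⟨p - 1, by omega⟩
  have hcenter : ∀ j, (A ^ j) center center = cascadeCoeff b j 0 := fun j => by
    simp [hApow, center, Nat.cast_sub hp]
  refine tendsto_rpow_inv_of_le_of_le (C := ((2 * p - 1 : ℕ) : ℝ)) (Nat.cast_pos.mpr (by omega))
    (fun j => (abs_nonneg _).trans (hrioul j 0)) (fun j => ?_) (fun j => ?_)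
    (tendsto_norm_pow_rpow_inv_spectralRadius A)
  · calc cascadeCoeff b j 0 ≤ ‖(A ^ j) center center‖ := by simp [hcenter, le_abs_self]
      _ ≤ ‖A ^ j‖ := Matrix.norm_apply_le_linfty_opNorm (A ^ j) center center
  · simpa using Matrix.linfty_opNorm_le_card_mul (A ^ j) ((abs_nonneg _).trans (hrioul j 0))
      fun k ℓ => by simpa [hApow] using hrioul j _
end

section
/- The spectral radius of the 2×2 matrix (1/8)[[38, 6], [-18, -18]] equals 9/2, and consequently the quintic Dubuc–Deslauriers scheme has Hölder regularity 5 - log₂(9/2). -/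
open scoped ENNReal

theorem Matrix.mem_spectrum_fin_two_iff {K : Type*} [Field K] (A : Matrix (Fin 2) (Fin 2) K)
    (z : K) : z ∈ spectrum K A ↔ z ^ 2 - A.trace * z + A.det = 0 := by
  simp [Matrix.mem_spectrum_iff_isRoot_charpoly, Matrix.charpoly_fin_two]

theorem spectralRadius_eq_max_of_spectrum_eq_pair {𝕜 A : Type*} [NormedField 𝕜] [Ring A]
    [Algebra 𝕜 A] {a : A} {x y : 𝕜} (h : spectrum 𝕜 a = {x, y}) :
    spectralRadius 𝕜 a = max (‖x‖₊ : ℝ≥0∞) ‖y‖₊ := by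
  rw [spectralRadius, h, iSup_pair]

open scoped ENNReal in
/-- The spectral radius of the `2 × 2` folded matrix `(1/8)[[38, 6], [-18, -18]]` of the
quintic Dubuc–Deslauriers scheme equals `9/2` (so that scheme has Hölder regularity
`5 - log₂(9/2)`). -/
theorem quintic_dubuc_deslauriers_spectral_radius :
    spectralRadius ℂ ((1 / 8 : ℂ) • !![(38 : ℂ), 6; -18, -18]) = (9 / 2 : ℝ≥0∞) := by
  have hspec : spectrum ℂ ((1 / 8 : ℂ) • !![(38 : ℂ), 6; -18, -18]) = {9 / 2, -2} := by
    ext z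
    have hfactor : z ^ 2 - 5 / 2 * z + -9 = (z - 9 / 2) * (z + 2) := by ring
    rw [Matrix.mem_spectrum_fin_two_iff]
    norm_num [Matrix.trace_fin_two, Matrix.det_fin_two, hfactor, sub_eq_zero,
      add_eq_zero_iff_eq_neg]
  rw [spectralRadius_eq_max_of_spectrum_eq_pair hspec]
  norm_num
  rw [ENNReal.le_div_iff_mul_le (by norm_num) (by norm_num)]
  norm_num
end

section
/- For all integers m ≥ 1, 1 ≤ ℓ ≤ m-1, and all s ∈ [0,1]: ∑_{k=0}^{ℓ} C(m-1+k, k) s^k ≤ ((m+ℓ)/ℓ) · ∑_{k=0}^{ℓ-1} C(m-1+k, k) s^k. -/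
/-!
Write `a k = C(m-1+k, k)`. The identity `ℓ · a ℓ = m · (a 0 + ⋯ + a (ℓ-1))`, a telescoped
form of the hockey-stick identity, bounds the top coefficient by the lower ones, and for
`s ∈ [0, 1]` the top power `s ^ ℓ` is dominated by every lower power `s ^ k`. Hence
`ℓ · a ℓ s ^ ℓ ≤ m · ∑_{k<ℓ} a k s ^ k`, which is the claim after multiplying out by `ℓ`.
-/

open Finset

theorem Nat.mul_add_choose_eq_mul_sum_range (n ℓ : ℕ) :
    ℓ * (n + ℓ).choose ℓ = (n + 1) * ∑ k ∈ range ℓ, (n + k).choose k := by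
  induction ℓ with
  | zero => simp
  | succ ℓ ih =>
    have h := Nat.add_one_mul_choose_eq (n + ℓ) ℓ
    rw [sum_range_succ, Nat.mul_add, ← ih, ← add_assoc]
    linarith

theorem mul_sum_range_succ_mul_pow_le {a : ℕ → ℝ} {ℓ : ℕ} {c s : ℝ}
    (ha : ∀ k, 0 ≤ a k) (hc : 0 ≤ c) (htop : ℓ * a ℓ ≤ c * ∑ k ∈ range ℓ, a k)
    (hs0 : 0 ≤ s) (hs1 : s ≤ 1) :
    ℓ * ∑ k ∈ range (ℓ + 1), a k * s ^ k ≤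
      (ℓ + c) * ∑ k ∈ range ℓ, a k * s ^ k := by
  have hpow : ∑ k ∈ range ℓ, a k * s ^ ℓ ≤ ∑ k ∈ range ℓ, a k * s ^ k :=
    sum_le_sum fun k hk =>
      mul_le_mul_of_nonneg_left (pow_le_pow_of_le_one hs0 hs1 (mem_range.mp hk).le) (ha k)
  have htop' : ℓ * (a ℓ * s ^ ℓ) ≤ c * ∑ k ∈ range ℓ, a k * s ^ k :=
    calc (ℓ : ℝ) * (a ℓ * s ^ ℓ) = ℓ * a ℓ * s ^ ℓ := by ring
      _ ≤ c * (∑ k ∈ range ℓ, a k) * s ^ ℓ := by gcongr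
      _ = c * ∑ k ∈ range ℓ, a k * s ^ ℓ := by rw [mul_assoc, sum_mul]
      _ ≤ c * ∑ k ∈ range ℓ, a k * s ^ k := by gcongr
  rw [sum_range_succ]
  linarith

theorem pseudo_spline_factor_ratio_ell_general
    (m ℓ : ℕ) (hm : 1 ≤ m) (hℓ1 : 1 ≤ ℓ)
    (s : ℝ) (hs : s ∈ Set.Icc (0 : ℝ) 1) :
    ∑ k ∈ range (ℓ + 1), ((m - 1 + k).choose k : ℝ) * s ^ k ≤
      (((m : ℝ) + ℓ) / ℓ) * ∑ k ∈ range ℓ, ((m - 1 + k).choose k : ℝ) * s ^ k := by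
  obtain ⟨n, rfl⟩ : ∃ n, m = n + 1 := ⟨m - 1, by omega⟩
  have hℓpos : (0 : ℝ) < ℓ := by exact_mod_cast hℓ1
  have htop : (ℓ : ℝ) * ((n + ℓ).choose ℓ : ℝ) =
      (n + 1) * ∑ k ∈ range ℓ, ((n + k).choose k : ℝ) := by
    exact_mod_cast Nat.mul_add_choose_eq_mul_sum_range n ℓ
  have key := mul_sum_range_succ_mul_pow_le (fun k => Nat.cast_nonneg ((n + k).choose k))
    (by positivity) htop.le hs.1 hs.2
  rw [Nat.add_sub_cancel, div_mul_eq_mul_div, le_div_iff₀ hℓpos]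
  push_cast
  linarith

open Finset in
/-- Key inequality in Theorem 7.2(i): for integers `m ≥ 1`, `1 ≤ ℓ ≤ m-1`, and
`s ∈ [0,1]`,
`∑_{k=0}^{ℓ} C(m-1+k, k) s^k ≤ ((m+ℓ)/ℓ) ∑_{k=0}^{ℓ-1} C(m-1+k, k) s^k`. -/
theorem pseudo_spline_factor_ratio_ell
    (m ℓ : ℕ) (hm : 1 ≤ m) (hℓ1 : 1 ≤ ℓ) (hℓ : ℓ ≤ m - 1)
    (s : ℝ) (hs : s ∈ Set.Icc (0 : ℝ) 1) :
    ∑ k ∈ range (ℓ + 1), ((m - 1 + k).choose k : ℝ) * s ^ k ≤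
      (((m : ℝ) + ℓ) / ℓ) * ∑ k ∈ range ℓ, ((m - 1 + k).choose k : ℝ) * s ^ k :=
  pseudo_spline_factor_ratio_ell_general m ℓ hm hℓ1 s hs
end

section
/- For all integers m ≥ 1, 0 ≤ ℓ ≤ m-1, and all s ∈ [0,1]: ∑_{k=0}^{ℓ} C(m+k, k) s^k ≤ ((m+ℓ)/m) · ∑_{k=0}^{ℓ} C(m-1+k, k) s^k. -/
theorem Nat.mul_choose_add_eq {m : ℕ} (hm : 0 < m) (k : ℕ) :
    m * (m + k).choose k = (m + k) * (m - 1 + k).choose k := by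
  have h := Nat.choose_mul_succ_eq (m - 1 + k) k
  rw [show m - 1 + k + 1 = m + k by omega, Nat.add_sub_cancel] at h
  rw [mul_comm, ← h, mul_comm]

theorem choose_add_mul_pow_le {m k ℓ : ℕ} (hm : 0 < m) (hk : k ≤ ℓ) {s : ℝ} (hs : 0 ≤ s) :
    ((m + k).choose k : ℝ) * s ^ k ≤ ((m + ℓ : ℝ) / m) * (((m - 1 + k).choose k : ℝ) * s ^ k) := by
  have hm' : (0 : ℝ) < m := by exact_mod_cast hm
  have hcast : (m : ℝ) * (m + k).choose k = (m + k) * (m - 1 + k).choose k := by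
    exact_mod_cast Nat.mul_choose_add_eq hm k
  have hkℓ : (m + k : ℝ) ≤ m + ℓ := by exact_mod_cast Nat.add_le_add_left hk m
  calc ((m + k).choose k : ℝ) * s ^ k
      = (m + k) * ((m - 1 + k).choose k : ℝ) / m * s ^ k := by
        rw [← hcast, mul_div_cancel_left₀ _ hm'.ne']
    _ ≤ (m + ℓ) * ((m - 1 + k).choose k : ℝ) / m * s ^ k := by gcongr
    _ = ((m + ℓ : ℝ) / m) * (((m - 1 + k).choose k : ℝ) * s ^ k) := by ring

open Finset in
theorem pseudo_spline_factor_ratio_m_general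
    (m ℓ : ℕ) (hm : 1 ≤ m)
    (s : ℝ) (hs : s ∈ Set.Icc (0 : ℝ) 1) :
    ∑ k ∈ range (ℓ + 1), ((m + k).choose k : ℝ) * s ^ k ≤
      (((m : ℝ) + ℓ) / m) * ∑ k ∈ range (ℓ + 1), ((m - 1 + k).choose k : ℝ) * s ^ k := by
  rw [mul_sum]
  exact sum_le_sum fun k hk =>
    choose_add_mul_pow_le hm (Nat.lt_succ_iff.mp (mem_range.mp hk)) hs.1

open Finset in
/-- Key inequality in Theorem 7.2(ii): for integers `m ≥ 1`, `0 ≤ ℓ ≤ m-1`, and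
`s ∈ [0,1]`,
`∑_{k=0}^{ℓ} C(m+k, k) s^k ≤ ((m+ℓ)/m) ∑_{k=0}^{ℓ} C(m-1+k, k) s^k`. -/
theorem pseudo_spline_factor_ratio_m
    (m ℓ : ℕ) (hm : 1 ≤ m) (hℓ : ℓ ≤ m - 1)
    (s : ℝ) (hs : s ∈ Set.Icc (0 : ℝ) 1) :
    ∑ k ∈ range (ℓ + 1), ((m + k).choose k : ℝ) * s ^ k ≤
      (((m : ℝ) + ℓ) / m) * ∑ k ∈ range (ℓ + 1), ((m - 1 + k).choose k : ℝ) * s ^ k :=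
  pseudo_spline_factor_ratio_m_general m ℓ hm s hs
end

section
/- For all integers m ≥ 1 and all s ∈ [0,1]: ∑_{k=0}^{m} C(m+k, k) s^k ≤ (2(2m+1)/(m+1)) · ∑_{k=0}^{m-1} C(m-1+k, k) s^k. -/
/-! Multiply by `m + 1` and compare coefficients. Termwise, `(m+1) C(m+k,k) ≤ 2(2m+1) C(m-1+k,k)`
for `k < m`; summed, the hockey-stick identity turns both coefficient sums into halves of central
binomial coefficients, whose ratio is exactly `2(2m+1)/(m+1)`, so the sums agree. The leading
coefficient `C(2m,m)` on the left is then absorbed on `[0,1]` because `s^m ≤ s^k` for `k ≤ m`. -/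

open Finset

theorem sum_range_succ_mul_pow_le_of_sum_le {R : Type*} [CommRing R] [LinearOrder R]
    [IsStrictOrderedRing R] {a b : ℕ → R} {n : ℕ} {s : R} (hs₀ : 0 ≤ s) (hs₁ : s ≤ 1)
    (hab : ∀ k < n, a k ≤ b k) (hsum : ∑ k ∈ range (n + 1), a k ≤ ∑ k ∈ range n, b k) :
    ∑ k ∈ range (n + 1), a k * s ^ k ≤ ∑ k ∈ range n, b k * s ^ k := by
  have hlast : a n ≤ ∑ k ∈ range n, (b k - a k) := by
    rw [sum_range_succ] at hsum
    rw [sum_sub_distrib]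
    linarith
  calc ∑ k ∈ range (n + 1), a k * s ^ k
      = ∑ k ∈ range n, a k * s ^ k + a n * s ^ n := sum_range_succ _ _
    _ ≤ ∑ k ∈ range n, a k * s ^ k + (∑ k ∈ range n, (b k - a k)) * s ^ n := by
      gcongr
    _ ≤ ∑ k ∈ range n, a k * s ^ k + ∑ k ∈ range n, (b k - a k) * s ^ k := by
      rw [sum_mul]
      refine add_le_add_right (sum_le_sum fun k hk => ?_) _
      exact mul_le_mul_of_nonneg_left (pow_le_pow_of_le_one hs₀ hs₁ (mem_range.1 hk).le)
        (sub_nonneg.2 (hab k (mem_range.1 hk)))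
    _ = ∑ k ∈ range n, b k * s ^ k := by
      rw [← sum_add_distrib]; exact sum_congr rfl fun k _ => by ring

namespace Nat

theorem add_one_add_mul_choose (n k : ℕ) :
    (n + 1 + k) * (n + k).choose k = (n + 1) * (n + 1 + k).choose k := by
  have h := choose_mul_succ_eq (n + k) k
  rw [show n + k + 1 - k = n + 1 by omega, show n + k + 1 = n + 1 + k by omega] at h
  rw [mul_comm, h, mul_comm]

theorem sum_range_add_choose_mul_two (n : ℕ) :
    (∑ k ∈ range (n + 1), (n + k).choose k) * 2 = centralBinom (n + 1) := by
  have hockey : ∑ k ∈ range (n + 1), (n + k).choose k = (n + 1 + n).choose n := by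
    rw [← choose_symm_add, add_right_comm, ← sum_range_add_choose]
    exact sum_congr rfl fun k _ => by rw [add_comm, choose_symm_add]
  rw [hockey, centralBinom_eq_two_mul_choose, two_mul, ← add_assoc,
    choose_succ_succ' (n + 1 + n) n, choose_symm_add, mul_two]

theorem add_two_mul_sum_range_add_choose (n : ℕ) :
    (n + 2) * ∑ k ∈ range (n + 2), (n + 1 + k).choose k =
      2 * (2 * n + 3) * ∑ k ∈ range (n + 1), (n + k).choose k := by
  have h := succ_mul_centralBinom_succ (n + 1)
  rw [← sum_range_add_choose_mul_two, ← sum_range_add_choose_mul_two] at h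
  linarith

theorem add_two_mul_choose_le (n : ℕ) {k : ℕ} (hk : k ≤ n) :
    (n + 2) * (n + 1 + k).choose k ≤ 2 * (2 * n + 3) * (n + k).choose k := by
  refine le_of_mul_le_mul_left ?_ (succ_pos n)
  calc (n + 1) * ((n + 2) * (n + 1 + k).choose k)
      = (n + 2) * (n + 1 + k) * (n + k).choose k := by
        rw [mul_assoc, add_one_add_mul_choose]; ring
    _ ≤ (n + 1) * (2 * (2 * n + 3)) * (n + k).choose k := Nat.mul_le_mul_right _ (by nlinarith)
    _ = (n + 1) * (2 * (2 * n + 3) * (n + k).choose k) := by ring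

end Nat

open Finset in
/-- Key inequality in Theorem 7.2(iii): for all integers `m ≥ 1` and `s ∈ [0,1]`,
`∑_{k=0}^{m} C(m+k, k) s^k ≤ (2(2m+1)/(m+1)) ∑_{k=0}^{m-1} C(m-1+k, k) s^k`.
This shows the regularity of the Dubuc–Deslauriers family increases with mask size. -/
theorem dubuc_deslauriers_factor_comparison
    (m : ℕ) (hm : 1 ≤ m) (s : ℝ) (hs : s ∈ Set.Icc (0 : ℝ) 1) :
    ∑ k ∈ range (m + 1), ((m + k).choose k : ℝ) * s ^ k ≤
      (2 * (2 * (m : ℝ) + 1) / ((m : ℝ) + 1)) *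
        ∑ k ∈ range m, ((m - 1 + k).choose k : ℝ) * s ^ k := by
  obtain ⟨n, rfl⟩ : ∃ n, m = n + 1 := ⟨m - 1, by omega⟩
  rw [Nat.add_sub_cancel, div_mul_eq_mul_div, le_div_iff₀ (by positivity), mul_comm, mul_sum,
    mul_sum]
  simp only [← mul_assoc]
  refine sum_range_succ_mul_pow_le_of_sum_le hs.1 hs.2 (fun k hk => ?_) ?_
  · exact_mod_cast Nat.add_two_mul_choose_le n (Nat.lt_succ_iff.1 hk)
  · rw [← mul_sum, ← mul_sum]
    exact_mod_cast (Nat.add_two_mul_sum_range_add_choose n).le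
end

section
/- For all integers m ≥ 1, 1 ≤ ℓ ≤ m-1, and s ∈ [0,1]: ∑_{k=0}^{ℓ} C(m-1/2+k, k) s^k ≤ ((m+ℓ+1/2)/ℓ) · ∑_{k=0}^{ℓ-1} C(m-1/2+k, k) s^k, where C(x,k) is the generalized binomial coefficient. -/
open Finset

/-- The generalized binomial coefficient `C(x, k) = x(x-1)⋯(x-k+1)/k!` for real `x`. -/
noncomputable def gchoose (x : ℝ) (k : ℕ) : ℝ :=
  (∏ i ∈ range k, (x - i)) / (k.factorial : ℝ)

/-! The terms `a k = C(x + k, k) s^k` satisfy `(k + 1) a (k + 1) = (x + 1 + k) s a k`, and for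
`x ≥ -1`, `0 ≤ s ≤ 1` they are nonnegative, so `(k + 1) a (k + 1) ≤ (x + 1 + k) a k`.
Summing this telescopically gives `ℓ a ℓ ≤ (x + 1) ∑_{k<ℓ} a k`, which is the claimed ratio
bound with `x = m - 1/2`. -/

lemma gchoose_add_one_succ (x : ℝ) (k : ℕ) :
    gchoose (x + 1) (k + 1) = (x + 1) / (k + 1) * gchoose x k := by
  have hprod : ∏ i ∈ range k, (x + 1 - (i + 1 : ℕ)) = ∏ i ∈ range k, (x - i) :=
    prod_congr rfl fun i _ => by push_cast; ring
  unfold gchoose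
  rw [prod_range_succ', hprod, Nat.factorial_succ]
  push_cast
  field_simp
  ring

lemma gchoose_nonneg {x : ℝ} {k : ℕ} (hx : ∀ i < k, (i : ℝ) ≤ x) : 0 ≤ gchoose x k :=
  div_nonneg (prod_nonneg fun i hi => sub_nonneg.mpr (hx i (mem_range.mp hi))) (by positivity)

lemma succ_mul_gchoose_add_mul_pow_le (x : ℝ) (hx : -1 ≤ x) {s : ℝ} (hs0 : 0 ≤ s) (hs1 : s ≤ 1)
    (k : ℕ) :
    ((k : ℝ) + 1) * (gchoose (x + (k + 1 : ℕ)) (k + 1) * s ^ (k + 1)) ≤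
      (x + 1 + k) * (gchoose (x + k) k * s ^ k) := by
  have hnonneg : 0 ≤ gchoose (x + k) k * s ^ k :=
    mul_nonneg (gchoose_nonneg fun i hi => by
      have : (i : ℝ) + 1 ≤ k := by exact_mod_cast hi
      linarith) (pow_nonneg hs0 k)
  have hrec : ((k : ℝ) + 1) * (gchoose (x + (k + 1 : ℕ)) (k + 1) * s ^ (k + 1)) =
      (x + 1 + k) * (gchoose (x + k) k * s ^ k) * s := by
    have hk : (0 : ℝ) < k + 1 := by positivity
    rw [show x + (k + 1 : ℕ) = x + k + 1 by push_cast; ring, gchoose_add_one_succ, pow_succ]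
    field_simp
    ring
  rw [hrec]
  exact mul_le_of_le_one_right (mul_nonneg (by linarith [k.cast_nonneg (α := ℝ)]) hnonneg) hs1

lemma mul_le_mul_sum_range_of_succ_mul_le {a : ℕ → ℝ} {c : ℝ}
    (h : ∀ k : ℕ, ((k : ℝ) + 1) * a (k + 1) ≤ (c + k) * a k) (j : ℕ) :
    (j : ℝ) * a j ≤ c * ∑ k ∈ range j, a k := by
  induction j with
  | zero => simp
  | succ j ih =>
    rw [sum_range_succ]
    push_cast
    linarith [h j]

lemma sum_range_succ_le_div_mul_sum_range {a : ℕ → ℝ} {c : ℝ} {ℓ : ℕ} (hℓ : 0 < ℓ)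
    (h : (ℓ : ℝ) * a ℓ ≤ c * ∑ k ∈ range ℓ, a k) :
    ∑ k ∈ range (ℓ + 1), a k ≤ (c + ℓ) / ℓ * ∑ k ∈ range ℓ, a k := by
  have hℓ' : (0 : ℝ) < ℓ := by exact_mod_cast hℓ
  rw [sum_range_succ, div_mul_eq_mul_div, le_div_iff₀ hℓ']
  linarith

theorem dual_pseudo_spline_factor_ratio_ell_general
    (m ℓ : ℕ) (hm : 1 ≤ m) (hℓ1 : 1 ≤ ℓ)
    (s : ℝ) (hs : s ∈ Set.Icc (0 : ℝ) 1) :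
    ∑ k ∈ range (ℓ + 1), gchoose ((m : ℝ) - 1 / 2 + k) k * s ^ k ≤
      (((m : ℝ) + ℓ + 1 / 2) / ℓ) * ∑ k ∈ range ℓ, gchoose ((m : ℝ) - 1 / 2 + k) k * s ^ k := by
  have hx : (-1 : ℝ) ≤ m - 1 / 2 := by
    have : (1 : ℝ) ≤ m := by exact_mod_cast hm
    linarith
  have hc : (m : ℝ) + ℓ + 1 / 2 = (m - 1 / 2 + 1) + ℓ := by ring
  rw [hc]
  exact sum_range_succ_le_div_mul_sum_range hℓ1 <|
    mul_le_mul_sum_range_of_succ_mul_le (a := fun k => gchoose ((m : ℝ) - 1 / 2 + k) k * s ^ k)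
      (succ_mul_gchoose_add_mul_pow_le _ hx hs.1 hs.2) ℓ

/-- Key estimate in Theorem 7.3(i): for integers `m ≥ 1`, `1 ≤ ℓ ≤ m-1`, and `s ∈ [0,1]`,
`∑_{k=0}^{ℓ} C(m-1/2+k, k) s^k ≤ ((m+ℓ+1/2)/ℓ) ∑_{k=0}^{ℓ-1} C(m-1/2+k, k) s^k`. -/
theorem dual_pseudo_spline_factor_ratio_ell
    (m ℓ : ℕ) (hm : 1 ≤ m) (hℓ1 : 1 ≤ ℓ) (hℓ : ℓ ≤ m - 1)
    (s : ℝ) (hs : s ∈ Set.Icc (0 : ℝ) 1) :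
    ∑ k ∈ range (ℓ + 1), gchoose ((m : ℝ) - 1 / 2 + k) k * s ^ k ≤
      (((m : ℝ) + ℓ + 1 / 2) / ℓ) * ∑ k ∈ range ℓ, gchoose ((m : ℝ) - 1 / 2 + k) k * s ^ k :=
  dual_pseudo_spline_factor_ratio_ell_general m ℓ hm hℓ1 s hs
end
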